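/- arXiv:1910.13385 — 2 statements merged into one kernel-verified Lean document; each statement's English description precedes it below -/
import Mathlib

section
/- Consider the network identity-expression game on N players with a directed network given by neighbor sets η(i) ⊆ {1,…,N}\{i}, utilities u_i(X) = −‖x_i − x̄_{η(i)}‖² − λ·ñ_i(X), and λ > 1. If there exist three distinct players i₁, i₂, i₃ with η(i₁) = {i₂}, η(i₂) = {i₃}, and η(i₃) = {i₁}, then the game has no pure strategy Nash equilibrium, regardless of the strategies and neighbor sets of the remaining players. -/
/-!
A player whose only neighbour is `j` can always deviate to a lattice neighbour of `x_j`, earning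
utility `-1`. Copying `x_j` earns `-λ < -1`, and any other strategy costs `‖x_i - x_j‖² ≥ 1`, so
in an equilibrium `‖x_i - x_j‖² = 1`. Each such step flips the parity of the coordinate sum,
which is impossible around a cycle of odd length three.
-/

open Finset

/-- Squared Euclidean norm of a real vector. -/
noncomputable def sqnorm {d : ℕ} (v : Fin d → ℝ) : ℝ := ∑ k, (v k) ^ 2

/-- Mean strategy of player `i`'s neighbors, computed coordinatewise in ℝ. -/
noncomputable def nbrMean {N d : ℕ} (η : Fin N → Finset (Fin N))
    (X : Fin N → Fin d → ℤ) (i : Fin N) : Fin d → ℝ :=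
  fun k => (∑ j ∈ η i, (X j k : ℝ)) / (η i).card

/-- Number of `i`'s neighbors adopting the same strategy as `i`. -/
def nTilde {N d : ℕ} (η : Fin N → Finset (Fin N))
    (X : Fin N → Fin d → ℤ) (i : Fin N) : ℕ :=
  ((η i).filter (fun j => X j = X i)).card

/-- Network utility: `u_i(X) = -‖x_i - x̄_{η(i)}‖² - λ ñ_i(X)`. -/
noncomputable def netUtility {N d : ℕ} (lam : ℝ) (η : Fin N → Finset (Fin N))
    (X : Fin N → Fin d → ℤ) (i : Fin N) : ℝ :=
  - sqnorm (fun k => (X i k : ℝ) - nbrMean η X i k) - lam * nTilde η X i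

def sqDist {d : ℕ} (x y : Fin d → ℤ) : ℤ := ∑ k, (x k - y k) ^ 2

def coordParity {d : ℕ} (x : Fin d → ℤ) : ZMod 2 := ∑ k, (x k : ZMod 2)

def IsPureNash {N d : ℕ} (lam : ℝ) (η : Fin N → Finset (Fin N)) (X : Fin N → Fin d → ℤ) :
    Prop :=
  ∀ (i : Fin N) (x' : Fin d → ℤ),
    netUtility lam η (Function.update X i x') i ≤ netUtility lam η X i

section sqDist

variable {d : ℕ}

lemma sqDist_nonneg (x y : Fin d → ℤ) : 0 ≤ sqDist x y :=
  sum_nonneg fun _ _ => sq_nonneg _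

lemma one_le_sqDist_of_ne {x y : Fin d → ℤ} (h : x ≠ y) : 1 ≤ sqDist x y := by
  obtain ⟨k, hk⟩ := Function.ne_iff.mp h
  have hk' : x k - y k ≠ 0 := sub_ne_zero.mpr hk
  calc 1 ≤ (x k - y k) ^ 2 := (one_le_sq_iff_one_le_abs _).mpr (Int.one_le_abs hk')
    _ ≤ sqDist x y := single_le_sum (f := fun k => (x k - y k) ^ 2)
          (fun _ _ => sq_nonneg _) (mem_univ k)

lemma sqDist_add_single_one_self (y : Fin d → ℤ) (k : Fin d) :
    sqDist (y + Pi.single k 1) y = 1 := by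
  simp [sqDist, Pi.single_apply]

lemma intCast_sqDist_zmod_two (x y : Fin d → ℤ) :
    ((sqDist x y : ℤ) : ZMod 2) = coordParity x - coordParity y := by
  simp [sqDist, coordParity, ZMod.pow_card, sum_sub_distrib]

lemma coordParity_eq_add_one_of_sqDist_eq_one {x y : Fin d → ℤ} (h : sqDist x y = 1) :
    coordParity x = coordParity y + 1 := by
  have := intCast_sqDist_zmod_two x y
  rw [h, Int.cast_one] at this
  exact sub_eq_iff_eq_add'.mp this.symm

end sqDist

lemma netUtility_of_eq_singleton {N d : ℕ} (lam : ℝ) {η : Fin N → Finset (Fin N)}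
    (X : Fin N → Fin d → ℤ) {i j : Fin N} (h : η i = {j}) :
    netUtility lam η X i = -(sqDist (X i) (X j) : ℝ) - lam * if X j = X i then 1 else 0 := by
  unfold netUtility sqnorm nbrMean nTilde sqDist
  rw [h]
  simp only [sum_singleton, card_singleton, Nat.cast_one, div_one, filter_singleton]
  split_ifs <;> simp

lemma IsPureNash.sqDist_eq_one {N d : ℕ} {lam : ℝ} {η : Fin N → Finset (Fin N)}
    {X : Fin N → Fin d → ℤ} (hX : IsPureNash lam η X) (hd : 1 ≤ d) (hlam : 1 < lam)
    {i j : Fin N} (hji : j ≠ i) (h : η i = {j}) : sqDist (X i) (X j) = 1 := by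
  unfold IsPureNash at hX
  set x' := X j + Pi.single ⟨0, hd⟩ 1
  have hx' : X j ≠ x' := fun heq => by
    simpa [x'] using congrFun heq ⟨0, hd⟩
  have dev := hX i x'
  rw [netUtility_of_eq_singleton lam _ h, netUtility_of_eq_singleton lam _ h,
    Function.update_self, Function.update_of_ne hji, sqDist_add_single_one_self,
    if_neg hx', Int.cast_one] at dev
  have hS : (0 : ℝ) ≤ sqDist (X i) (X j) := mod_cast sqDist_nonneg (X i) (X j)
  have hne : X i ≠ X j := fun heq => by
    rw [if_pos heq.symm] at dev
    linarith
  rw [if_neg (Ne.symm hne)] at dev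
  have hle : (sqDist (X i) (X j) : ℝ) ≤ 1 := by linarith
  exact le_antisymm (mod_cast hle) (one_le_sqDist_of_ne hne)

theorem no_pure_nash_of_three_cycle_general {N d : ℕ} (hd : 1 ≤ d)
    (η : Fin N → Finset (Fin N))
    (lam : ℝ) (hlam : 1 < lam)
    (i₁ i₂ i₃ : Fin N) (h12 : i₁ ≠ i₂) (h13 : i₁ ≠ i₃) (h23 : i₂ ≠ i₃)
    (hcyc1 : η i₁ = {i₂}) (hcyc2 : η i₂ = {i₃}) (hcyc3 : η i₃ = {i₁}) :
    ¬ ∃ X : Fin N → Fin d → ℤ,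
      ∀ (i : Fin N) (x' : Fin d → ℤ),
        netUtility lam η (Function.update X i x') i ≤ netUtility lam η X i := by
  rintro ⟨X, hX⟩
  have flip {i j : Fin N} (hji : j ≠ i) (h : η i = {j}) :
      coordParity (X i) = coordParity (X j) + 1 :=
    coordParity_eq_add_one_of_sqDist_eq_one (IsPureNash.sqDist_eq_one hX hd hlam hji h)
  have h3 : (3 : ZMod 2) = 0 := by
    linear_combination -(flip h12.symm hcyc1 + flip h23.symm hcyc2 + flip h13 hcyc3)
  exact absurd h3 (by decide)

/-- If the directed social network contains three distinct players forming a directed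
3-cycle of sole observation (`η(i₁) = {i₂}`, `η(i₂) = {i₃}`, `η(i₃) = {i₁}`), then with
`λ > 1` the network identity-expression game has no pure strategy Nash equilibrium,
regardless of the strategies and neighbor sets of the remaining players. -/
theorem no_pure_nash_of_three_cycle {N d : ℕ} (hd : 1 ≤ d)
    (η : Fin N → Finset (Fin N))
    (hηne : ∀ i, (η i).Nonempty) (hηirr : ∀ i, i ∉ η i)
    (lam : ℝ) (hlam : 1 < lam)
    (i₁ i₂ i₃ : Fin N) (h12 : i₁ ≠ i₂) (h13 : i₁ ≠ i₃) (h23 : i₂ ≠ i₃)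
    (hcyc1 : η i₁ = {i₂}) (hcyc2 : η i₂ = {i₃}) (hcyc3 : η i₃ = {i₁}) :
    ¬ ∃ X : Fin N → Fin d → ℤ,
      ∀ (i : Fin N) (x' : Fin d → ℤ),
        netUtility lam η (Function.update X i x') i ≤ netUtility lam η X i :=
  no_pure_nash_of_three_cycle_general hd η lam hlam i₁ i₂ i₃ h12 h13 h23 hcyc1 hcyc2 hcyc3
end

section
/- (Three-player non-convergence.) In the three-player cyclic network game (player 1 observes only player 2, player 2 observes only player 3, player 3 observes only player 1) with strategies in ℤ^d and λ > 1, every strategy profile admits a strictly improving unilateral deviation; hence any sequence of profiles generated by better-reply dynamics (where at each step some player switches to a strictly better reply whenever one exists) never reaches an absorbing state, i.e., at every time step at least one player has a profitable deviation. -/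
open Finset

/-- Squared Euclidean distance between two integer vectors. -/
def sqdist {d : ℕ} (x y : Fin d → ℤ) : ℤ := ∑ k, (x k - y k) ^ 2

/-- Utility of a player who observes a single neighbor: if the player plays `x` and his
neighbor plays `y`, his utility is `-‖x - y‖² - λ·[x = y]`. -/
noncomputable def pairU {d : ℕ} (lam : ℝ) (x y : Fin d → ℤ) : ℝ :=
  -(sqdist x y : ℝ) - lam * (if x = y then 1 else 0)

/-- A profile `(x₁, x₂, x₃)` of the three-player cyclic network game admits a strictly
improving unilateral deviation for some player. -/
def HasImprovingDeviation {d : ℕ} (lam : ℝ)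
    (x₁ x₂ x₃ : Fin d → ℤ) : Prop :=
  (∃ y : Fin d → ℤ, pairU lam x₁ x₂ < pairU lam y x₂) ∨
  (∃ y : Fin d → ℤ, pairU lam x₂ x₃ < pairU lam y x₃) ∨
  (∃ y : Fin d → ℤ, pairU lam x₃ x₁ < pairU lam y x₁)

lemma sqdist_nonneg {d : ℕ} (x y : Fin d → ℤ) : 0 ≤ sqdist x y :=
  Finset.sum_nonneg fun k _ => sq_nonneg _

lemma sqdist_eq_zero_iff {d : ℕ} (x y : Fin d → ℤ) : sqdist x y = 0 ↔ x = y := by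
  constructor
  · intro h
    funext k
    have := (Finset.sum_eq_zero_iff_of_nonneg (fun k _ => sq_nonneg (x k - y k))).mp h k
      (Finset.mem_univ k)
    have := pow_eq_zero_iff (n := 2) (by norm_num) |>.mp this
    linarith
  · intro h; subst h; simp [sqdist]

lemma exists_dev {d : ℕ} (hd : 1 ≤ d) (y : Fin d → ℤ) :
    ∃ y' : Fin d → ℤ, y' ≠ y ∧ sqdist y' y = 1 := by
  have i : Fin d := ⟨0, hd⟩
  refine ⟨Function.update y i (y i + 1), ?_, ?_⟩
  · intro h
    have := congrFun h i
    simp [Function.update_self] at this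
  · unfold sqdist
    rw [Finset.sum_eq_single i]
    · simp [Function.update_self]
    · intro k _ hk
      simp [Function.update_of_ne hk]
    · intro h; exact absurd (Finset.mem_univ i) h

lemma dev_utility {d : ℕ} (hd : 1 ≤ d) (lam : ℝ) (hlam : 1 < lam) (x y : Fin d → ℤ)
    (h : sqdist x y ≠ 1) : ∃ y' : Fin d → ℤ, pairU lam x y < pairU lam y' y := by
  obtain ⟨y', hne, hsq⟩ := exists_dev hd y
  refine ⟨y', ?_⟩
  have hval : pairU lam y' y = -1 := by simp [pairU, hsq, hne]
  rw [hval]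
  by_cases hxy : x = y
  · subst hxy
    have h0 : sqdist x x = 0 := (sqdist_eq_zero_iff x x).mpr rfl
    simp [pairU, h0]; linarith
  · have h0 : sqdist x y ≠ 0 := fun h0 => hxy ((sqdist_eq_zero_iff x y).mp h0)
    have h2 : 2 ≤ sqdist x y := by
      have := sqdist_nonneg x y
      omega
    have : (2 : ℝ) ≤ (sqdist x y : ℝ) := by exact_mod_cast h2
    simp [pairU, hxy]
    linarith

lemma sum_sq_parity {d : ℕ} (x y : Fin d → ℤ) (h : sqdist x y = 1) :
    (∑ k, ((x k : ZMod 2) - y k)) = 1 := by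
  have : ((sqdist x y : ℤ) : ZMod 2) = 1 := by rw [h]; norm_num
  rw [sqdist] at this
  push_cast at this
  rw [← this]
  apply Finset.sum_congr rfl
  intro k _
  have : ∀ a : ZMod 2, a = a ^ 2 := by decide
  exact this _

/-- Three-player non-convergence: in the three-player cyclic network game with `λ > 1`,
every strategy profile admits a strictly improving unilateral deviation; hence along any
sequence of profiles generated by better-reply dynamics, no profile is ever an absorbing
state — at every time step at least one player has a profitable deviation. -/
theorem three_player_nonconvergence {d : ℕ} (hd : 1 ≤ d) (lam : ℝ) (hlam : 1 < lam) :
    (∀ x₁ x₂ x₃ : Fin d → ℤ, HasImprovingDeviation lam x₁ x₂ x₃) ∧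
    (∀ (Xs : ℕ → ((Fin d → ℤ) × (Fin d → ℤ) × (Fin d → ℤ))) (t : ℕ),
      HasImprovingDeviation lam (Xs t).1 (Xs t).2.1 (Xs t).2.2) := by
  have main : ∀ x₁ x₂ x₃ : Fin d → ℤ, HasImprovingDeviation lam x₁ x₂ x₃ := by
    intro x₁ x₂ x₃
    by_cases h12 : sqdist x₁ x₂ = 1
    · by_cases h23 : sqdist x₂ x₃ = 1
      · by_cases h31 : sqdist x₃ x₁ = 1
        · exfalso
          have p12 := sum_sq_parity x₁ x₂ h12
          have p23 := sum_sq_parity x₂ x₃ h23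
          have p31 := sum_sq_parity x₃ x₁ h31
          have : (∑ k, ((x₁ k : ZMod 2) - x₂ k)) + (∑ k, ((x₂ k : ZMod 2) - x₃ k))
              + (∑ k, ((x₃ k : ZMod 2) - x₁ k)) = 0 := by
            rw [← Finset.sum_add_distrib, ← Finset.sum_add_distrib]
            apply Finset.sum_eq_zero
            intro k _
            ring
          rw [p12, p23, p31] at this
          exact absurd this (by decide)
        · exact Or.inr (Or.inr (dev_utility hd lam hlam x₃ x₁ h31))
      · exact Or.inr (Or.inl (dev_utility hd lam hlam x₂ x₃ h23))
    · exact Or.inl (dev_utility hd lam hlam x₁ x₂ h12)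
  exact ⟨main, fun Xs t => main _ _ _⟩
end
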